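/- For every positive integer n and all x ≥ sqrt(2(n-1)) (with n ≥ 2): H_n(x)/H_{n-1}(x) > x + sqrt(x² - 2(n-1)). In particular H_n(x) > 0 for x ≥ sqrt(2(n-1)), so the largest zero of H_n is less than sqrt(2(n-1)) for n ≥ 2. -/
import Mathlib


/-- The physicists' Hermite polynomials:
`H₀ = 1`, `H₁(x) = 2x`, `H_{n+2}(x) = 2x H_{n+1}(x) - 2(n+1) Hₙ(x)`. -/
noncomputable def physHermite : ℕ → ℝ → ℝ
  | 0, _ => 1
  | 1, x => 2 * x
  | n + 2, x => 2 * x * physHermite (n + 1) x - 2 * ((n : ℝ) + 1) * physHermite n x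

lemma hermite_aux (m : ℕ) : ∀ x : ℝ, Real.sqrt (2 * ((m : ℝ) + 1)) ≤ x →
    x + Real.sqrt (x ^ 2 - 2 * ((m : ℝ) + 1)) < physHermite (m + 2) x / physHermite (m + 1) x ∧
    0 < physHermite (m + 1) x ∧ 0 < physHermite (m + 2) x := by
  induction m with
  | zero =>
    intro x hx
    have hx' : Real.sqrt 2 ≤ x := by norm_num at hx; simpa using hx
    have hs2 : (Real.sqrt 2) ^ 2 = 2 := Real.sq_sqrt (by norm_num)
    have hs2n : (0:ℝ) ≤ Real.sqrt 2 := Real.sqrt_nonneg 2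
    have hx2 : (2:ℝ) ≤ x ^ 2 := by nlinarith
    have hxpos : 0 < x := lt_of_lt_of_le (by positivity) hx'
    have hx1 : 1 < x := by nlinarith
    have hinv : 0 < x - 1 / x := by
      have : 1 / x < 1 := by rw [div_lt_one hxpos]; exact hx1
      linarith
    have hsqrt : Real.sqrt (x ^ 2 - 2) < x - 1 / x := by
      rw [Real.sqrt_lt' hinv]
      have h1 : x * (1 / x) = 1 := by field_simp
      have h2 : 0 < (1 / x) ^ 2 := by positivity
      nlinarith
    have hH1 : physHermite 1 x = 2 * x := by simp [physHermite]
    have hH2 : physHermite 2 x = 4 * x ^ 2 - 2 := by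
      simp [physHermite]; ring
    have hratio : physHermite 2 x / physHermite 1 x = 2 * x - 1 / x := by
      rw [hH1, hH2]; field_simp; ring
    refine ⟨?_, by rw [hH1]; linarith, by rw [hH2]; nlinarith⟩
    have heq : x ^ 2 - 2 * (((0:ℕ):ℝ) + 1) = x ^ 2 - 2 := by norm_num
    rw [heq, hratio]
    linarith
  | succ m ih =>
    intro x hx
    push_cast at hx ⊢
    set c : ℝ := (m : ℝ) with hc
    have h2m2 : (0:ℝ) ≤ 2 * (c + 1 + 1) := by positivity
    have hx' : Real.sqrt (2 * (c + 1)) ≤ x :=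
      le_trans (Real.sqrt_le_sqrt (by linarith)) hx
    obtain ⟨hr, hp1, hp2⟩ := ih x hx'
    push_cast at hr
    have hxpos : 0 < x :=
      lt_of_lt_of_le (Real.sqrt_pos.mpr (by positivity)) hx
    have hx2 : 2 * (c + 1 + 1) ≤ x ^ 2 := by
      nlinarith [Real.sq_sqrt h2m2, Real.sqrt_nonneg (2 * (c + 1 + 1))]
    set s₁ : ℝ := Real.sqrt (x ^ 2 - 2 * (c + 1)) with hs1
    set s₂ : ℝ := Real.sqrt (x ^ 2 - 2 * (c + 1 + 1)) with hs2
    have hs2sq : s₂ ^ 2 = x ^ 2 - 2 * (c + 1 + 1) := Real.sq_sqrt (by linarith)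
    have hs2le : s₂ ≤ x := by
      calc s₂ ≤ Real.sqrt (x ^ 2) := Real.sqrt_le_sqrt (by linarith)
        _ = x := Real.sqrt_sq hxpos.le
    have hs12 : s₂ ≤ s₁ := Real.sqrt_le_sqrt (by linarith)
    have hs1n : 0 ≤ s₁ := Real.sqrt_nonneg _
    have hs2n : 0 ≤ s₂ := Real.sqrt_nonneg _
    have hapos : 0 < x + s₁ := by linarith
    have key : 2 * (c + 1 + 1) ≤ (x - s₂) * (x + s₁) := by nlinarith
    have hfrac : physHermite (m + 1) x / physHermite (m + 2) x < 1 / (x + s₁) := by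
      rw [div_lt_div_iff₀ hp2 hapos]
      have := (lt_div_iff₀ hp1).mp hr
      nlinarith
    have hH2ne : physHermite (m + 2) x ≠ 0 := ne_of_gt hp2
    have hdef : physHermite (m + 3) x =
        2 * x * physHermite (m + 2) x - 2 * (c + 1 + 1) * physHermite (m + 1) x := by
      show physHermite (m + 1 + 2) x = _
      rw [physHermite]; push_cast; ring
    have hratio : physHermite (m + 3) x / physHermite (m + 2) x =
        2 * x - 2 * (c + 1 + 1) * (physHermite (m + 1) x / physHermite (m + 2) x) := by
      rw [hdef]; field_simp
    have hcpos : (0:ℝ) < 2 * (c + 1 + 1) := by positivity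
    have hmain : x + s₂ < physHermite (m + 3) x / physHermite (m + 2) x := by
      rw [hratio]
      have h1 : 2 * (c + 1 + 1) * (physHermite (m + 1) x / physHermite (m + 2) x)
          < 2 * (c + 1 + 1) * (1 / (x + s₁)) := by
        exact mul_lt_mul_of_pos_left hfrac hcpos
      have h2 : 2 * (c + 1 + 1) * (1 / (x + s₁)) ≤ x - s₂ := by
        rw [mul_one_div, div_le_iff₀ hapos]
        linarith [key]
      linarith
    have hp3 : 0 < physHermite (m + 3) x := by
      have hq : 0 < physHermite (m + 3) x / physHermite (m + 2) x :=
        lt_trans (by linarith) hmain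
      have := mul_pos hq hp2
      rwa [div_mul_cancel₀ _ hH2ne] at this
    exact ⟨by convert hmain using 3 <;> push_cast <;> ring, hp2, hp3⟩

/-- For `n ≥ 2` and `x ≥ √(2(n-1))`:
`Hₙ(x)/Hₙ₋₁(x) > x + √(x² - 2(n-1))`; in particular `Hₙ(x) > 0` there, so the
largest zero of `Hₙ` is less than `√(2(n-1))`. -/
theorem hermite_ratio_lower_bound (n : ℕ) (hn : 2 ≤ n) (x : ℝ)
    (hx : Real.sqrt (2 * ((n : ℝ) - 1)) ≤ x) :
    x + Real.sqrt (x ^ 2 - 2 * ((n : ℝ) - 1)) <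
      physHermite n x / physHermite (n - 1) x ∧
    0 < physHermite n x := by
  obtain ⟨m, rfl⟩ : ∃ m, n = m + 2 := ⟨n - 2, by omega⟩
  have hcast : ((m + 2 : ℕ) : ℝ) - 1 = (m : ℝ) + 1 := by push_cast; ring
  rw [hcast] at hx ⊢
  have h := hermite_aux m x hx
  have : m + 2 - 1 = m + 1 := by omega
  rw [this]
  exact ⟨h.1, h.2.2⟩
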